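/- Transformation of cycle affinities under hidden time reversal (Theorem 'affaff'): Let k ≥ 2 and let v : Fin (k+1) → Fin n be a closed walk (v k = v 0) such that for every step l < k one has v (l+1) ≠ v l, W (v (l+1)) (v l) > 0 and W (v l) (v (l+1)) > 0. Define the cycle affinity A := ∑_{l<k} Real.log (W (v (l+1)) (v l) / W (v l) (v (l+1))) and define à by the same formula with W replaced by W̃. Then: (i) if no step satisfies {v l, v (l+1)} = {a, b}, then à = −A; (ii) if exactly one step l has (v (l+1), v l) = (a, b) and no step has (v (l+1), v l) = (b, a), then à = −A + 2*Q. -/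
import Mathlib

open Matrix

lemma log_key (px py u w : ℝ) (hpx : 0 < px) (hpy : 0 < py) (hu : 0 < u) (hw : 0 < w) :
    Real.log ((px * u / py) / (py * w / px))
      = 2 * Real.log px - 2 * Real.log py + Real.log (u / w) := by
  rw [Real.log_div (by positivity) (by positivity),
      Real.log_div (by positivity) hpy.ne', Real.log_div (by positivity) hpx.ne',
      Real.log_mul hpx.ne' hu.ne', Real.log_mul hpy.ne' hw.ne',
      Real.log_div hu.ne' hw.ne']
  ring

lemma telesum {n k : ℕ} (f : Fin n → ℝ) (v : Fin (k + 1) → Fin n)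
    (hclosed : v (Fin.last k) = v 0) :
    ∑ l : Fin k, (f (v l.succ) - f (v l.castSucc)) = 0 := by
  set F : ℕ → ℝ := fun i => if h : i ≤ k then f (v ⟨i, Nat.lt_succ_of_le h⟩) else 0 with hF
  have h1 : ∑ l : Fin k, (f (v l.succ) - f (v l.castSucc))
      = ∑ i ∈ Finset.range k, (F (i + 1) - F i) := by
    rw [← Fin.sum_univ_eq_sum_range (fun i => F (i + 1) - F i)]
    apply Finset.sum_congr rfl
    intro l _
    have hlk : (l : ℕ) < k := l.isLt
    have e1 : F ((l : ℕ) + 1) = f (v l.succ) := by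
      rw [hF]; simp only []; rw [dif_pos (Nat.succ_le_of_lt hlk)]; rfl
    have e2 : F (l : ℕ) = f (v l.castSucc) := by
      rw [hF]; simp only []; rw [dif_pos hlk.le]; rfl
    rw [e1, e2]
  rw [h1, Finset.sum_range_sub]
  have : F k = F 0 := by
    rw [hF]; simp only [dif_pos (le_refl k), dif_pos (Nat.zero_le k)]
    have h0 : (⟨k, Nat.lt_succ_of_le le_rfl⟩ : Fin (k+1)) = Fin.last k := rfl
    have h0' : (⟨0, Nat.lt_succ_of_le (Nat.zero_le k)⟩ : Fin (k+1)) = 0 := rfl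
    rw [h0, h0', hclosed]
  rw [this, sub_self]

theorem cycle_affinity_hidden_TR {n : ℕ} (hn : 3 ≤ n)
    (W Whid : Matrix (Fin n) (Fin n) ℝ)
    (hW1 : ∀ i j, i ≠ j → 0 ≤ W i j)
    (hW2 : ∀ j, ∑ i, W i j = 0)
    (a b : Fin n) (hab : a ≠ b)
    (hWab : 0 < W a b) (hWba : 0 < W b a)
    (hH1 : Whid a b = 0) (hH2 : Whid b a = 0)
    (hH3 : Whid a a = W a a + W b a)
    (hH4 : Whid b b = W b b + W a b)
    (hH5 : ∀ i j, ¬(i = a ∧ j = b) → ¬(i = b ∧ j = a) → ¬(i = a ∧ j = a) →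
      ¬(i = b ∧ j = b) → Whid i j = W i j)
    (p : Fin n → ℝ) (hp1 : ∀ i, 0 < p i) (hp2 : ∑ i, p i = 1)
    (hp3 : Whid *ᵥ p = 0)
    (Q : ℝ) (hQdef : Q = Real.log (W a b * p b / (W b a * p a)))
    (M : ℝ → Matrix (Fin n) (Fin n) ℝ)
    (hM1 : ∀ q, M q a b = W a b * Real.exp (-q))
    (hM2 : ∀ q, M q b a = W b a * Real.exp q)
    (hM3 : ∀ q i j, ¬(i = a ∧ j = b) → ¬(i = b ∧ j = a) → M q i j = W i j)
    (Wt : Matrix (Fin n) (Fin n) ℝ)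
    (hWt : Wt = Matrix.diagonal p * (M Q)ᵀ * (Matrix.diagonal p)⁻¹)
    (k : ℕ) (hk : 2 ≤ k)
    (v : Fin (k + 1) → Fin n)
    (hclosed : v (Fin.last k) = v 0)
    (hstep : ∀ l : Fin k, v l.succ ≠ v l.castSucc ∧
      0 < W (v l.succ) (v l.castSucc) ∧ 0 < W (v l.castSucc) (v l.succ)) :
    ((∀ l : Fin k, ¬((v l.castSucc = a ∧ v l.succ = b) ∨ (v l.castSucc = b ∧ v l.succ = a))) →
      (∑ l : Fin k, Real.log (Wt (v l.succ) (v l.castSucc) / Wt (v l.castSucc) (v l.succ)))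
        = -(∑ l : Fin k, Real.log (W (v l.succ) (v l.castSucc) / W (v l.castSucc) (v l.succ)))) ∧
    (((∃! l : Fin k, v l.succ = a ∧ v l.castSucc = b) ∧
      (∀ l : Fin k, ¬(v l.succ = b ∧ v l.castSucc = a))) →
      (∑ l : Fin k, Real.log (Wt (v l.succ) (v l.castSucc) / Wt (v l.castSucc) (v l.succ)))
        = -(∑ l : Fin k, Real.log (W (v l.succ) (v l.castSucc) / W (v l.castSucc) (v l.succ)))
          + 2 * Q) := by
  -- entry formula for Wt
  have hdiaginv : (Matrix.diagonal p)⁻¹ = Matrix.diagonal (fun i => (p i)⁻¹) := by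
    apply Matrix.inv_eq_right_inv
    rw [Matrix.diagonal_mul_diagonal]
    have h1 : (fun i => p i * (p i)⁻¹) = fun _ => (1:ℝ) := funext fun i => mul_inv_cancel₀ (hp1 i).ne'
    rw [h1]
    exact Matrix.diagonal_one
  have hentry : ∀ i j, Wt i j = p i * M Q j i / p j := by
    intro i j
    rw [hWt, hdiaginv, Matrix.mul_diagonal, Matrix.diagonal_mul,
        Matrix.transpose_apply, div_eq_mul_inv]
  -- positivity of M Q entries
  have hMpos : ∀ i j, i ≠ j → 0 < W i j → 0 < M Q i j := by
    intro i j hij hWij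
    by_cases h1 : i = a ∧ j = b
    · rw [h1.1, h1.2, hM1]; positivity
    by_cases h2 : i = b ∧ j = a
    · rw [h2.1, h2.2, hM2]; positivity
    · rwa [hM3 Q i j h1 h2]
  -- positivity of Wt entries along the walk
  have hWtpos : ∀ (x y : Fin n), x ≠ y → 0 < W x y → 0 < W y x →
      Real.log (Wt x y / Wt y x)
        = 2 * Real.log (p x) - 2 * Real.log (p y) + Real.log (M Q y x / M Q x y) := by
    intro x y hxy hWxy hWyx
    rw [hentry, hentry]
    exact log_key (p x) (p y) (M Q y x) (M Q x y) (hp1 x) (hp1 y)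
      (hMpos y x (Ne.symm hxy) hWyx) (hMpos x y hxy hWxy)
  have hmain : ∀ l : Fin k,
      Real.log (Wt (v l.succ) (v l.castSucc) / Wt (v l.castSucc) (v l.succ))
        = (2 * Real.log (p (v l.succ)) - 2 * Real.log (p (v l.castSucc)))
          + Real.log (M Q (v l.castSucc) (v l.succ) / M Q (v l.succ) (v l.castSucc)) := by
    intro l
    obtain ⟨h1, h2, h3⟩ := hstep l
    rw [hWtpos _ _ h1 h2 h3]
  have htel : ∑ l : Fin k,
      (2 * Real.log (p (v l.succ)) - 2 * Real.log (p (v l.castSucc))) = 0 :=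
    telesum (fun i => 2 * Real.log (p i)) v hclosed
  have hsplit : (∑ l : Fin k, Real.log (Wt (v l.succ) (v l.castSucc) / Wt (v l.castSucc) (v l.succ)))
      = ∑ l : Fin k, Real.log (M Q (v l.castSucc) (v l.succ) / M Q (v l.succ) (v l.castSucc)) := by
    rw [Finset.sum_congr rfl (fun l _ => hmain l), Finset.sum_add_distrib, htel, zero_add]
  constructor
  · intro hno
    rw [hsplit, ← Finset.sum_neg_distrib]
    apply Finset.sum_congr rfl
    intro l _
    obtain ⟨h1, h2, h3⟩ := hstep l
    have hna : ¬(v l.castSucc = a ∧ v l.succ = b) := fun h => hno l (Or.inl h)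
    have hnb : ¬(v l.castSucc = b ∧ v l.succ = a) := fun h => hno l (Or.inr h)
    rw [hM3 Q _ _ hna hnb, hM3 Q _ _ (fun h => hnb ⟨h.2, h.1⟩) (fun h => hna ⟨h.2, h.1⟩),
        ← Real.log_inv, inv_div]
  · rintro ⟨⟨l₀, hl₀, huniq⟩, hnoba⟩
    rw [hsplit]
    have hterm : ∀ l : Fin k,
        Real.log (M Q (v l.castSucc) (v l.succ) / M Q (v l.succ) (v l.castSucc))
          = -Real.log (W (v l.succ) (v l.castSucc) / W (v l.castSucc) (v l.succ))
            + (if l = l₀ then 2 * Q else 0) := by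
      intro l
      obtain ⟨h1, h2, h3⟩ := hstep l
      by_cases hl : l = l₀
      · subst hl
        rw [if_pos rfl, hl₀.1, hl₀.2, hM1, hM2,
            Real.log_div (by positivity) (by positivity),
            Real.log_div hWab.ne' hWba.ne',
            Real.log_mul hWba.ne' (Real.exp_ne_zero Q),
            Real.log_mul hWab.ne' (Real.exp_ne_zero (-Q)),
            Real.log_exp, Real.log_exp]
        ring
      · rw [if_neg hl, add_zero]
        have hna : ¬(v l.castSucc = a ∧ v l.succ = b) :=
          fun h => hnoba l ⟨h.2, h.1⟩
        have hnb : ¬(v l.castSucc = b ∧ v l.succ = a) :=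
          fun h => hl (huniq l ⟨h.2, h.1⟩)
        rw [hM3 Q _ _ hna hnb, hM3 Q _ _ (fun h => hnb ⟨h.2, h.1⟩) (fun h => hna ⟨h.2, h.1⟩),
            ← Real.log_inv, inv_div]
    rw [Finset.sum_congr rfl (fun l _ => hterm l), Finset.sum_add_distrib,
        Finset.sum_neg_distrib, Finset.sum_ite_eq' Finset.univ l₀ (fun _ => 2 * Q),
        if_pos (Finset.mem_univ l₀)]
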